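/- arXiv:1704.05809 — 4 statements merged into one kernel-verified Lean document; each statement's English description precedes it below -/
import Mathlib

section
/- For any partition λ and integer c, the admissible set S(λ,c) := {λ_i − i + 1/2 + c : i ≥ 1} (a subset of ℤ + 1/2) has charge C(S) = |S_+| − |S_−| equal to c and energy H(S) = Σ_{k∈S_+} k − Σ_{k∈S_−} k equal to |λ| + c²/2, where S_+ = S ∖ (ℤ+1/2)_{<0} and S_− = (ℤ+1/2)_{<0} ∖ S. -/
/-!
Statement 0: for any partition λ and integer c, the admissible set
`S(λ,c) = {λ_i − i + 1/2 + c : i ≥ 1}` has charge `c` and energy `|λ| + c²/2`.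

We encode the half-integer `m + 1/2` by the integer `m`, so that `S(λ,c)` becomes
`{λ_i − i + c : i ≥ 1} ⊆ ℤ` (0-indexed: `{λ_i − (i+1) + c : i ∈ ℕ}`), the positive
half-integers correspond to `{m | 0 ≤ m}`, and the value of the half-integer encoded
by `m` is `m + 1/2`.  Partitions are taken as `Σ n, Nat.Partition n`, listed in weakly
decreasing order (padded with zeros).
-/

/-- The weakly decreasing list of parts of a partition. -/
def partList (pp : Σ n, Nat.Partition n) : List ℕ :=
  (Multiset.sort pp.2.parts (· ≤ ·)).reverse

/-- The Maya set `S(λ,c) = {λ_i − i + 1/2 + c : i ≥ 1}` of a partition with charge `c`,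
in coordinates where `m : ℤ` stands for the half-integer `m + 1/2`. -/
def mayaSet (pp : Σ n, Nat.Partition n) (c : ℤ) : Set ℤ :=
  {m | ∃ i : ℕ, m = ((partList pp).getD i 0 : ℤ) - (i + 1) + c}

/-- `S₊ = S ∖ ℤ'_{<0}` (in the integer encoding). -/
def posPart (S : Set ℤ) : Set ℤ := S ∩ {m | 0 ≤ m}

/-- `S₋ = ℤ'_{<0} ∖ S` (in the integer encoding). -/
def negPart (S : Set ℤ) : Set ℤ := {m | m < 0} \ S

lemma aux_sum_range_getD (L : List ℕ) : ∀ N, L.length ≤ N →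
    ∑ i ∈ Finset.range N, L.getD i 0 = L.sum := by
  induction L with
  | nil => simp
  | cons a t ih =>
    intro N hN
    obtain ⟨N', rfl⟩ : ∃ N', N = N' + 1 := ⟨N - 1, by simp at hN; omega⟩
    rw [Finset.sum_range_succ']
    simp only [List.getD_cons_succ, List.getD_cons_zero, List.sum_cons]
    rw [ih N' (by simp at hN; omega)]; omega

lemma aux_getD_anti (L : List ℕ) (hL : L.Pairwise (fun a b => b ≤ a)) (i : ℕ) :
    L.getD (i+1) 0 ≤ L.getD i 0 := by
  by_cases h : i + 1 < L.length
  · rw [List.getD_eq_getElem _ _ h, List.getD_eq_getElem _ _ (by omega)]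
    exact List.pairwise_iff_getElem.1 hL i (i+1) (by omega) h (by omega)
  · rw [List.getD_eq_default _ _ (by omega)]; exact Nat.zero_le _

lemma aux_gauss (n : ℕ) : ∑ i ∈ Finset.range n, (i : ℚ) = n * (n - 1) / 2 := by
  induction n with
  | zero => simp
  | succ n ih => rw [Finset.sum_range_succ, ih]; push_cast; ring

theorem charge_energy_of_mayaSet (pp : Σ n, Nat.Partition n) (c : ℤ) :
    ∃ (hp : (posPart (mayaSet pp c)).Finite) (hm : (negPart (mayaSet pp c)).Finite),
      ((hp.toFinset.card : ℤ) - (hm.toFinset.card : ℤ) = c) ∧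
      ((∑ m ∈ hp.toFinset, ((m : ℚ) + 1/2)) - (∑ m ∈ hm.toFinset, ((m : ℚ) + 1/2))
        = (pp.1 : ℚ) + (c : ℚ) ^ 2 / 2) := by
  set L : List ℕ := partList pp with hLdef
  have hsort : L.Pairwise (fun a b => b ≤ a) :=
    List.pairwise_reverse.2 (by simpa using Multiset.pairwise_sort pp.2.parts (· ≤ ·))
  set f : ℕ → ℤ := fun i => (L.getD i 0 : ℤ) - (i + 1) + c with hfdef
  have hanti : StrictAnti f := by
    apply strictAnti_nat_of_succ_lt
    intro n
    have := aux_getD_anti L hsort n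
    simp only [hfdef]
    push_cast
    omega
  obtain ⟨N, hNl, hcN, hN1⟩ : ∃ N : ℕ, L.length ≤ N ∧ c ≤ (N : ℤ) ∧ 1 ≤ N :=
    ⟨L.length + c.natAbs + 1, by omega, by omega, by omega⟩
  set T : Finset ℤ := (Finset.range N).image f with hTdef
  have hmemT : ∀ m ∈ T, (c : ℤ) - N ≤ m := by
    intro m hm
    simp only [hTdef, Finset.mem_image, Finset.mem_range] at hm
    obtain ⟨i, hi, rfl⟩ := hm
    simp only [hfdef]
    have : (0:ℤ) ≤ L.getD i 0 := Int.natCast_nonneg _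
    omega
  -- set characterization
  have hSeq : mayaSet pp c = ↑T ∪ {m | m < (c : ℤ) - N} := by
    ext m
    constructor
    · rintro ⟨i, rfl⟩
      by_cases hi : i < N
      · left
        simp only [hTdef, Finset.coe_image, Set.mem_image, Finset.coe_range, Set.mem_Iio]
        exact ⟨i, hi, rfl⟩
      · right
        have h0 : L.getD i 0 = 0 := List.getD_eq_default _ _ (by omega)
        simp only [Set.mem_setOf_eq, h0]
        push_cast
        have h0' : (partList pp).getD i 0 = 0 := h0
        omega
    · rintro (hm | hm)
      · simp only [hTdef, Finset.coe_image, Set.mem_image, Finset.coe_range, Set.mem_Iio] at hm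
        obtain ⟨i, _, rfl⟩ := hm
        exact ⟨i, rfl⟩
      · simp only [Set.mem_setOf_eq] at hm
        refine ⟨(c - 1 - m).toNat, ?_⟩
        have h1 : ((c - 1 - m).toNat : ℤ) = c - 1 - m := Int.toNat_of_nonneg (by omega)
        have h0 : L.getD (c - 1 - m).toNat 0 = 0 := by
          apply List.getD_eq_default
          omega
        rw [h0, h1]
        push_cast
        ring
  set P : Finset ℤ := T.filter (fun m => 0 ≤ m) with hPdef
  set Q : Finset ℤ := T.filter (fun m => ¬ 0 ≤ m) with hQdef
  set I : Finset ℤ := Finset.Ico ((c : ℤ) - N) 0 with hIdef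
  set M : Finset ℤ := I \ Q with hMdef
  have hQT : Q ⊆ T := Finset.filter_subset _ _
  have hQI : Q ⊆ I := by
    intro m hm
    simp only [hQdef, Finset.mem_filter, not_le] at hm
    simp only [hIdef, Finset.mem_Ico]
    exact ⟨hmemT m hm.1, hm.2⟩
  have hpos : _root_.posPart (mayaSet pp c) = ↑P := by
    ext m
    simp only [_root_.posPart, Set.mem_inter_iff, Set.mem_setOf_eq, hPdef,
      Finset.coe_filter, Finset.mem_coe]
    rw [hSeq]
    constructor
    · rintro ⟨hm | hm, h0⟩
      · exact ⟨hm, h0⟩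
      · exfalso; simp only [Set.mem_setOf_eq] at hm; omega
    · rintro ⟨hm, h0⟩; exact ⟨Or.inl hm, h0⟩
  have hneg : _root_.negPart (mayaSet pp c) = ↑M := by
    ext m
    simp only [_root_.negPart, Set.mem_diff, Set.mem_setOf_eq, Finset.mem_coe,
      hMdef, Finset.mem_sdiff, hIdef, Finset.mem_Ico]
    constructor
    · rintro ⟨h0, hS⟩
      have hT : m ∉ T := fun h => hS (by rw [hSeq]; exact Or.inl h)
      have hlow : ¬ m < (c:ℤ) - N := fun h => hS (by rw [hSeq]; exact Or.inr h)
      exact ⟨⟨by omega, h0⟩, fun hQ => hT (hQT hQ)⟩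
    · rintro ⟨⟨hge, h0⟩, hQ⟩
      refine ⟨h0, ?_⟩
      rw [hSeq]
      rintro (hT | hlow)
      · exact hQ (by simp only [hQdef, Finset.mem_filter]; exact ⟨hT, by omega⟩)
      · simp only [Set.mem_setOf_eq] at hlow; omega
  have hp : (_root_.posPart (mayaSet pp c)).Finite := by rw [hpos]; exact P.finite_toSet
  have hm : (_root_.negPart (mayaSet pp c)).Finite := by rw [hneg]; exact M.finite_toSet
  have hpF : hp.toFinset = P := by
    ext x; rw [Set.Finite.mem_toFinset, hpos]; exact Finset.mem_coe
  have hmF : hm.toFinset = M := by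
    ext x; rw [Set.Finite.mem_toFinset, hneg]; exact Finset.mem_coe
  -- cardinalities
  have hinj : Set.InjOn f (Finset.range N) := hanti.injective.injOn
  have hTcard : T.card = N := by
    rw [hTdef, Finset.card_image_of_injOn hinj, Finset.card_range]
  have hPQ : P.card + Q.card = N := by
    rw [hPdef, hQdef, Finset.card_filter_add_card_filter_not, hTcard]
  have hIcard : (I.card : ℤ) = (N : ℤ) - c := by
    rw [hIdef, Int.card_Ico, Int.toNat_of_nonneg (by omega)]
    ring
  have hMcard : M.card = I.card - Q.card := Finset.card_sdiff_of_subset hQI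
  have hQle : Q.card ≤ I.card := Finset.card_le_card hQI
  refine ⟨hp, hm, ?_, ?_⟩
  · -- charge
    rw [hpF, hmF]
    omega
  · -- energy
    rw [hpF, hmF]
    have hsplitT : (∑ m ∈ P, ((m:ℚ) + 1/2)) + (∑ m ∈ Q, ((m:ℚ) + 1/2))
        = ∑ m ∈ T, ((m:ℚ) + 1/2) := by
      rw [hPdef, hQdef]; exact Finset.sum_filter_add_sum_filter_not T _ _
    have hsplitI : (∑ m ∈ M, ((m:ℚ) + 1/2)) + (∑ m ∈ Q, ((m:ℚ) + 1/2))
        = ∑ m ∈ I, ((m:ℚ) + 1/2) := by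
      rw [hMdef]; exact Finset.sum_sdiff hQI
    -- sum over T
    have hLsum : (L.sum : ℚ) = (pp.1 : ℚ) := by
      have : L.sum = pp.1 := by
        rw [hLdef]
        show ((Multiset.sort pp.2.parts (· ≤ ·)).reverse).sum = pp.1
        rw [List.sum_reverse, ← Multiset.sum_coe, Multiset.sort_eq, pp.2.parts_sum]
      exact_mod_cast congrArg (Nat.cast : ℕ → ℚ) this
    have hTsum : ∑ m ∈ T, ((m:ℚ) + 1/2)
        = (pp.1 : ℚ) + N * c - (N:ℚ)^2 / 2 := by
      rw [hTdef, Finset.sum_image (fun x hx y hy h => hinj (by simpa using hx) (by simpa using hy) h)]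
      have heq : ∀ i ∈ Finset.range N, ((f i : ℚ) + 1/2)
          = (L.getD i 0 : ℚ) + ((c:ℚ) - i - 1 + 1/2) := by
        intro i _
        simp only [hfdef]
        push_cast
        ring
      rw [Finset.sum_congr rfl heq, Finset.sum_add_distrib]
      have h1 : ∑ i ∈ Finset.range N, (L.getD i 0 : ℚ) = (pp.1 : ℚ) := by
        rw [← hLsum, ← aux_sum_range_getD L N hNl]
        push_cast
        rfl
      have h2 : ∑ i ∈ Finset.range N, ((c:ℚ) - i - 1 + 1/2)
          = N * c - (N:ℚ) * ((N:ℚ) - 1) / 2 - N/2 := by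
        have : ∀ i ∈ Finset.range N, ((c:ℚ) - i - 1 + 1/2) = ((c:ℚ) - 1 + 1/2) - (i:ℚ) := by
          intro i _; ring
        rw [Finset.sum_congr rfl this, Finset.sum_sub_distrib, Finset.sum_const,
          Finset.card_range, aux_gauss, nsmul_eq_mul]
        ring
      rw [h1, h2]
      ring
    -- sum over I
    obtain ⟨k, hk⟩ : ∃ k : ℕ, (k : ℤ) = (N : ℤ) - c :=
      ⟨((N:ℤ) - c).toNat, Int.toNat_of_nonneg (by omega)⟩
    have hIim : I = (Finset.range k).image (fun j : ℕ => (c : ℤ) - N + j) := by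
      ext m
      simp only [hIdef, Finset.mem_Ico, Finset.mem_image, Finset.mem_range]
      constructor
      · rintro ⟨h1, h2⟩
        exact ⟨(m - ((c:ℤ) - N)).toNat, by omega, by omega⟩
      · rintro ⟨j, hj, rfl⟩
        omega
    have hIsum : ∑ m ∈ I, ((m:ℚ) + 1/2)
        = (k:ℚ) * ((c:ℚ) - N) + (k:ℚ) * ((k:ℚ) - 1) / 2 + (k:ℚ)/2 := by
      rw [hIim, Finset.sum_image (by intro x _ y _ h; have h' : (c:ℤ) - N + x = (c:ℤ) - N + y := h; omega)]
      have heq : ∀ j ∈ Finset.range k, ((((c : ℤ) - N + j : ℤ) : ℚ) + 1/2)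
          = (((c:ℚ) - N) + 1/2) + (j:ℚ) := by
        intro j _; push_cast; ring
      rw [Finset.sum_congr rfl heq, Finset.sum_add_distrib, Finset.sum_const,
        Finset.card_range, aux_gauss, nsmul_eq_mul]
      ring
    have hkQ : (k : ℚ) = (N : ℚ) - (c : ℚ) := by exact_mod_cast hk
    rw [show (∑ m ∈ P, ((m:ℚ) + 1/2)) - (∑ m ∈ M, ((m:ℚ) + 1/2))
        = (∑ m ∈ T, ((m:ℚ) + 1/2)) - (∑ m ∈ I, ((m:ℚ) + 1/2)) by linarith]
    rw [hTsum, hIsum, hkQ]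
    ring
end

section
/- The Jacobi triple product identity: for complex q with |q| < 1 and z ≠ 0, Σ_{n∈ℤ} q^{n²/2} z^n = (q;q)_∞ · ∏_{i ∈ ℕ + 1/2} (1 + q^i z)(1 + q^i/z), where (q;q)_∞ = ∏_{k≥1} (1 − q^k) and the product over i runs over positive half-integers 1/2, 3/2, 5/2, …. -/
/-!
Here `qBinom q m k` is the Gaussian binomial coefficient `[m, k]_q` and `qPochhammer q n` is
`(q;q)_n`. Cauchy's `q`-binomial theorem `∏_{j<m} (1 + q^j x) = ∑_k q^(k choose 2) [m, k]_q x^k`,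
taken at `q = s²`, `m = 2N`, `x = s^(1-2N) z`, gives the finite triple product
`∏_{i<N} (1 + s^(2i+1) z) (1 + s^(2i+1) / z) = ∑_{|n| ≤ N} [2N, N+n]_{s²} s^(n²) z^n`.
As `N → ∞`, `[2N, N+n]_q = (q;q)_{2N} / ((q;q)_{N+n} (q;q)_{N-n}) → 1 / (q;q)_∞`, and
`‖[m, k]_q‖ ≤ 1 / (‖q‖;‖q‖)_k` bounds all coefficients uniformly, so dominated convergence
(Tannery's theorem) passes to the limit.
-/

open Filter Topology Finset

section CommRing

variable {R : Type*} [CommRing R] (q : R)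

def qBinom : ℕ → ℕ → R
  | _, 0 => 1
  | 0, _ + 1 => 0
  | m + 1, k + 1 => qBinom m k + q ^ (k + 1) * qBinom m (k + 1)

@[simp] lemma qBinom_zero_right (m : ℕ) : qBinom q m 0 = 1 := by cases m <;> rfl

lemma qBinom_succ_succ (m k : ℕ) :
    qBinom q (m + 1) (k + 1) = qBinom q m k + q ^ (k + 1) * qBinom q m (k + 1) := rfl

lemma qBinom_of_lt {m k : ℕ} (h : m < k) : qBinom q m k = 0 := by
  induction m generalizing k with
  | zero => obtain ⟨k, rfl⟩ := Nat.exists_eq_add_of_lt h; rfl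
  | succ m ih =>
    obtain ⟨k, rfl⟩ := Nat.exists_eq_add_of_lt (Nat.zero_lt_of_lt h)
    rw [qBinom_succ_succ, ih (by omega), ih (by omega), mul_zero, add_zero]

@[simp] lemma qBinom_self (m : ℕ) : qBinom q m m = 1 := by
  induction m with
  | zero => rfl
  | succ m ih => rw [qBinom_succ_succ, ih, qBinom_of_lt q m.lt_succ_self, mul_zero, add_zero]

def qPochhammer (n : ℕ) : R := ∏ i ∈ range n, (1 - q ^ (i + 1))

@[simp] lemma qPochhammer_zero : qPochhammer q 0 = 1 := rfl

lemma qPochhammer_succ (n : ℕ) : qPochhammer q (n + 1) = qPochhammer q n * (1 - q ^ (n + 1)) :=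
  prod_range_succ _ _

lemma qBinom_add_mul_qPochhammer (a b : ℕ) :
    qBinom q (a + b) a * (qPochhammer q a * qPochhammer q b) = qPochhammer q (a + b) := by
  induction a generalizing b with
  | zero => simp
  | succ a iha =>
    induction b with
    | zero => simp
    | succ b ihb =>
      have ha := iha (b + 1)
      rw [← add_assoc] at ha
      rw [add_right_comm] at ihb
      rw [← add_assoc, add_right_comm a 1 b, qBinom_succ_succ]
      simp only [qPochhammer_succ] at *
      linear_combination (1 - q ^ (a + 1)) * ha + q ^ (a + 1) * (1 - q ^ (b + 1)) * ihb

theorem prod_one_add_pow_mul_eq_sum_qBinom (x : R) (m : ℕ) :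
    ∏ j ∈ range m, (1 + q ^ j * x) =
      ∑ k ∈ range (m + 1), q ^ k.choose 2 * qBinom q m k * x ^ k := by
  induction m generalizing x with
  | zero => simp
  | succ m ih =>
    have hchoose (k : ℕ) : q ^ (k + 1).choose 2 = q ^ k.choose 2 * q ^ k := by
      rw [Nat.choose_succ_succ', Nat.choose_one_right, ← pow_add, add_comm]
    have hshift :
        ∏ j ∈ range m, (1 + q ^ (j + 1) * x) = ∏ j ∈ range m, (1 + q ^ j * (q * x)) := by
      simp only [pow_succ, mul_assoc]
    set c : ℕ → R := fun k => q ^ k.choose 2 * qBinom q m k * (q * x) ^ k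
    have hlow : ∑ k ∈ range (m + 1), c k = 1 + ∑ k ∈ range (m + 1),
        q ^ (k + 1).choose 2 * (q ^ (k + 1) * qBinom q m (k + 1)) * x ^ (k + 1) := by
      rw [sum_range_succ' c m, sum_range_succ _ m, qBinom_of_lt q m.lt_succ_self, add_comm]
      simp only [c, hchoose, Nat.choose_zero_succ, pow_zero, qBinom_zero_right, mul_one, mul_zero,
        zero_mul, add_zero, add_right_inj]
      exact sum_congr rfl fun k _ => by ring
    have hhigh : (∑ k ∈ range (m + 1), c k) * x =
        ∑ k ∈ range (m + 1), q ^ (k + 1).choose 2 * qBinom q m k * x ^ (k + 1) := by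
      rw [sum_mul]
      exact sum_congr rfl fun k _ => by simp only [c, hchoose]; ring
    rw [prod_range_succ', hshift, ih, pow_zero, one_mul, sum_range_succ' _ (m + 1)]
    simp only [qBinom_succ_succ, mul_add, add_mul, sum_add_distrib, mul_one, Nat.choose_zero_succ,
      pow_zero, qBinom_zero_right]
    linear_combination hlow + hhigh

end CommRing

section Field

variable {K : Type*} [Field K] {s z : K}

lemma prod_range_two_mul_one_add_zpow_mul (hs : s ≠ 0) (hz : z ≠ 0) (N : ℕ) :
    ∏ j ∈ range (2 * N), (1 + s ^ (2 * (j : ℤ) + 1 - 2 * N) * z) =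
      s ^ (-(N : ℤ) ^ 2) * z ^ N *
        ∏ i ∈ range N, (1 + s ^ (2 * i + 1) * z) * (1 + s ^ (2 * i + 1) / z) := by
  induction N with
  | zero => simp
  | succ N ih =>
    -- the exponents for `N + 1` are those for `N` together with `±(2N + 1)`
    have hshift (j : ℕ) :
        2 * ((j + 1 : ℕ) : ℤ) + 1 - 2 * (N + 1 : ℕ) = 2 * (j : ℤ) + 1 - 2 * N := by
      push_cast; ring
    have hlast : 2 * ((2 * N : ℕ) : ℤ) + 1 - 2 * N = ((2 * N + 1 : ℕ) : ℤ) := by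
      push_cast; ring
    have hfirst : 2 * ((0 : ℕ) : ℤ) + 1 - 2 * (N + 1 : ℕ) = -((2 * N + 1 : ℕ) : ℤ) := by
      push_cast; ring
    have hsq : -((N + 1 : ℕ) : ℤ) ^ 2 = -(N : ℤ) ^ 2 + -((2 * N + 1 : ℕ) : ℤ) := by
      push_cast; ring
    rw [show 2 * (N + 1) = 2 * N + 1 + 1 by ring, prod_range_succ', prod_range_succ]
    simp only [hshift, hlast, hfirst]
    rw [ih, hsq, zpow_add₀ hs, zpow_neg _ ((2 * N + 1 : ℕ) : ℤ), zpow_natCast, prod_range_succ]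
    have hfactor : 1 + (s ^ (2 * N + 1))⁻¹ * z =
        (s ^ (2 * N + 1))⁻¹ * z * (1 + s ^ (2 * N + 1) / z) := by
      field_simp
      ring
    rw [hfactor]
    ring

lemma two_mul_cast_choose_two (k : ℕ) : (2 * k.choose 2 : ℤ) = k * (k - 1) := by
  have h := Nat.cast_choose_two ℚ k
  have : ((2 * k.choose 2 : ℤ) : ℚ) = ((k * (k - 1) : ℤ) : ℚ) := by push_cast; rw [h]; ring
  exact_mod_cast this

theorem prod_range_jacobi_eq_sum_qBinom (hs : s ≠ 0) (hz : z ≠ 0) (N : ℕ) :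
    ∏ i ∈ range N, (1 + s ^ (2 * i + 1) * z) * (1 + s ^ (2 * i + 1) / z) =
      ∑ n ∈ Icc (-(N : ℤ)) N, qBinom (s ^ 2) (2 * N) (N + n).toNat * (s ^ (n ^ 2) * z ^ n) := by
  have key := prod_one_add_pow_mul_eq_sum_qBinom (s ^ 2) (s ^ (1 - 2 * N : ℤ) * z) (2 * N)
  have hlhs (j : ℕ) :
      1 + (s ^ 2) ^ j * (s ^ (1 - 2 * N : ℤ) * z) = 1 + s ^ (2 * (j : ℤ) + 1 - 2 * N) * z := by
    rw [← pow_mul, ← zpow_natCast, ← mul_assoc, ← zpow_add₀ hs]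
    push_cast; ring_nf
  have hterm (k : ℕ) :
      (s ^ 2) ^ k.choose 2 * qBinom (s ^ 2) (2 * N) k * (s ^ (1 - 2 * N : ℤ) * z) ^ k =
        s ^ (-(N : ℤ) ^ 2) * z ^ N *
          (qBinom (s ^ 2) (2 * N) k * (s ^ ((-N + k : ℤ) ^ 2) * z ^ (-N + k : ℤ))) := by
    have hexp : (2 * k.choose 2 : ℤ) + (1 - 2 * N) * k = -(N : ℤ) ^ 2 + (-N + k) ^ 2 := by
      rw [two_mul_cast_choose_two]; ring
    rw [mul_pow, ← pow_mul, ← zpow_natCast, ← zpow_natCast (s ^ _), ← zpow_mul, ← zpow_natCast z]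
    calc _ = qBinom (s ^ 2) (2 * N) k *
            (s ^ ((2 * k.choose 2 : ℤ) + (1 - 2 * N) * k) * z ^ (N + (-N + k) : ℤ)) := by
          rw [zpow_add₀ hs]; push_cast; ring_nf
      _ = _ := by rw [hexp, zpow_add₀ hs, zpow_add₀ hz, zpow_natCast]; ring
  rw [prod_congr rfl fun j _ => hlhs j, prod_range_two_mul_one_add_zpow_mul hs hz,
    sum_congr rfl fun k _ => hterm k, ← mul_sum] at key
  rw [mul_left_cancel₀ (by positivity) key, Int.Icc_eq_finset_map, sum_map,
    show ((N : ℤ) + 1 - -N).toNat = 2 * N + 1 by omega]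
  simp

end Field

section NormedField

variable {𝕜 : Type*} [NormedField 𝕜]

lemma summable_norm_mul_pow_mul_add {s : 𝕜} (hs : ‖s‖ < 1) (c : 𝕜) {a : ℕ} (ha : a ≠ 0)
    (b : ℕ) :
    Summable fun i : ℕ => ‖c * s ^ (a * i + b)‖ := by
  have hr : ‖s‖ ^ a < 1 := pow_lt_one₀ (norm_nonneg _) hs ha
  refine ((summable_geometric_of_lt_one (by positivity) hr).mul_left (‖c‖ * ‖s‖ ^ b)).congr
    fun i => ?_
  rw [norm_mul, norm_pow, pow_add, pow_mul]
  ring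

lemma one_sub_pow_ne_zero {q : 𝕜} (hq : ‖q‖ < 1) {n : ℕ} (hn : n ≠ 0) : 1 - q ^ n ≠ 0 := by
  intro h
  have := pow_lt_one₀ (norm_nonneg q) hq hn
  rw [← norm_pow, ← sub_eq_zero.1 h, norm_one] at this
  exact this.false

lemma qPochhammer_pos {r : ℝ} (hr0 : 0 ≤ r) (hr : r < 1) (n : ℕ) : 0 < qPochhammer r n :=
  prod_pos fun i _ => sub_pos.2 (pow_lt_one₀ hr0 hr i.succ_ne_zero)

lemma norm_qBinom_le {q : 𝕜} (hq : ‖q‖ < 1) (m k : ℕ) :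
    ‖qBinom q m k‖ ≤ (qPochhammer ‖q‖ k)⁻¹ := by
  induction m generalizing k with
  | zero =>
    cases k with
    | zero => simp
    | succ k => simpa [qBinom_of_lt q k.succ_pos] using (qPochhammer_pos (norm_nonneg q) hq _).le
  | succ m ih =>
    cases k with
    | zero => simp
    | succ k =>
      calc ‖qBinom q (m + 1) (k + 1)‖
          ≤ (qPochhammer ‖q‖ k)⁻¹ + ‖q‖ ^ (k + 1) * (qPochhammer ‖q‖ (k + 1))⁻¹ := by
            rw [qBinom_succ_succ]
            refine (norm_add_le _ _).trans (add_le_add (ih k) ?_)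
            rw [norm_mul, norm_pow]
            exact mul_le_mul_of_nonneg_left (ih (k + 1)) (by positivity)
        _ = (qPochhammer ‖q‖ (k + 1))⁻¹ := by
            have hP := qPochhammer_pos (norm_nonneg q) hq k
            have hfactor : 0 < 1 - ‖q‖ ^ (k + 1) :=
              sub_pos.2 (pow_lt_one₀ (norm_nonneg q) hq k.succ_ne_zero)
            rw [qPochhammer_succ]
            field_simp
            ring

lemma multipliable_one_sub_pow_succ [CompleteSpace 𝕜] {q : 𝕜} (hq : ‖q‖ < 1) :
    Multipliable fun i : ℕ => 1 - q ^ (i + 1) := by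
  simpa [sub_eq_add_neg] using multipliable_one_add_of_summable
    (by simpa using summable_norm_mul_pow_mul_add hq (-1) one_ne_zero 1)

lemma tendsto_qPochhammer [CompleteSpace 𝕜] {q : 𝕜} (hq : ‖q‖ < 1) :
    Tendsto (qPochhammer q) atTop (𝓝 (∏' i : ℕ, (1 - q ^ (i + 1)))) :=
  (multipliable_one_sub_pow_succ hq).hasProd.tendsto_prod_nat

lemma tprod_one_sub_pow_succ_ne_zero [CompleteSpace 𝕜] {q : 𝕜} (hq : ‖q‖ < 1) :
    ∏' i : ℕ, (1 - q ^ (i + 1)) ≠ 0 := by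
  simpa [sub_eq_add_neg] using tprod_one_add_ne_zero_of_summable (f := fun i : ℕ => -q ^ (i + 1))
    (fun i => by simpa [sub_eq_add_neg] using one_sub_pow_ne_zero hq i.succ_ne_zero)
    (by simpa using summable_norm_mul_pow_mul_add hq (-1) one_ne_zero 1)

lemma exists_forall_norm_qBinom_le {q : 𝕜} (hq : ‖q‖ < 1) : ∃ B, ∀ m k, ‖qBinom q m k‖ ≤ B := by
  have hr : ‖‖q‖‖ < 1 := by rwa [norm_norm]
  obtain ⟨B, hB⟩ :=
    ((tendsto_qPochhammer hr).inv₀ (tprod_one_sub_pow_succ_ne_zero hr)).bddAbove_range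
  exact ⟨B, fun m k => (norm_qBinom_le hq m k).trans (hB ⟨k, rfl⟩)⟩

lemma tendsto_qBinom_add [CompleteSpace 𝕜] {ι : Type*} {l : Filter ι} {a b : ι → ℕ}
    (ha : Tendsto a l atTop) (hb : Tendsto b l atTop) {q : 𝕜} (hq : ‖q‖ < 1) :
    Tendsto (fun i => qBinom q (a i + b i) (a i)) l (𝓝 (∏' i : ℕ, (1 - q ^ (i + 1)))⁻¹) := by
  set L := ∏' i : ℕ, (1 - q ^ (i + 1))
  have hL0 : L ≠ 0 := tprod_one_sub_pow_succ_ne_zero hq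
  have hL : L * L ≠ 0 := mul_ne_zero hL0 hL0
  have hden : Tendsto (fun i => qPochhammer q (a i) * qPochhammer q (b i)) l (𝓝 (L * L)) :=
    ((tendsto_qPochhammer hq).comp ha).mul ((tendsto_qPochhammer hq).comp hb)
  have hnum : Tendsto (fun i => qPochhammer q (a i + b i)) l (𝓝 L) :=
    (tendsto_qPochhammer hq).comp (tendsto_atTop_mono (fun i => Nat.le_add_right _ _) ha)
  have hquot := hnum.div hden hL
  rw [div_mul_cancel_left₀ hL0] at hquot
  refine hquot.congr' ?_
  filter_upwards [hden.eventually_ne hL] with i hi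
  rw [Pi.div_apply, div_eq_iff hi, qBinom_add_mul_qPochhammer]

lemma summable_pow_sq_mul_pow {r : ℝ} (hr0 : 0 ≤ r) (hr : r < 1) (c : ℝ) :
    Summable fun k : ℕ => r ^ (k ^ 2) * c ^ k := by
  have hlim : Tendsto (fun k : ℕ => r ^ k * c) atTop (𝓝 0) := by
    simpa using (tendsto_pow_atTop_nhds_zero_of_lt_one hr0 hr).mul_const c
  refine summable_geometric_two.of_norm_bounded_eventually_nat ?_
  filter_upwards [hlim.norm.eventually (ge_mem_nhds (by norm_num : ‖(0 : ℝ)‖ < 1 / 2))] with k hk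
  rw [sq, pow_mul, ← mul_pow, norm_pow]
  exact pow_le_pow_left₀ (norm_nonneg _) hk k

lemma summable_norm_zpow_sq_mul_zpow {s : 𝕜} (hs : ‖s‖ < 1) (z : 𝕜) :
    Summable fun n : ℤ => ‖s ^ (n ^ 2) * z ^ n‖ := by
  refine Summable.of_nat_of_neg ?_ ?_
  · refine (summable_pow_sq_mul_pow (norm_nonneg s) hs ‖z‖).congr fun k => ?_
    rw [norm_mul, norm_zpow, norm_zpow, ← Nat.cast_pow, zpow_natCast, zpow_natCast]
  · refine (summable_pow_sq_mul_pow (norm_nonneg s) hs ‖z‖⁻¹).congr fun k => ?_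
    rw [norm_mul, norm_zpow, norm_zpow, neg_sq, ← Nat.cast_pow, zpow_natCast, zpow_neg,
      zpow_natCast, inv_pow]

theorem tendsto_prod_jacobi [CompleteSpace 𝕜] {s z : 𝕜} (hs : ‖s‖ < 1) (hs0 : s ≠ 0)
    (hz : z ≠ 0) :
    Tendsto (fun N : ℕ => ∏ i ∈ range N, (1 + s ^ (2 * i + 1) * z) * (1 + s ^ (2 * i + 1) / z))
      atTop (𝓝 ((∏' i : ℕ, (1 - (s ^ 2) ^ (i + 1)))⁻¹ * ∑' n : ℤ, s ^ (n ^ 2) * z ^ n)) := by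
  have hq : ‖s ^ 2‖ < 1 := by rw [norm_pow]; exact pow_lt_one₀ (norm_nonneg s) hs two_ne_zero
  obtain ⟨B, hB⟩ := exists_forall_norm_qBinom_le hq
  set f : ℕ → ℤ → 𝕜 := fun N => Set.indicator ↑(Icc (-(N : ℤ)) N)
    fun n => qBinom (s ^ 2) (2 * N) ((N : ℤ) + n).toNat * (s ^ (n ^ 2) * z ^ n)
  have hfin (N : ℕ) : ∑' n, f N n =
      ∏ i ∈ range N, (1 + s ^ (2 * i + 1) * z) * (1 + s ^ (2 * i + 1) / z) := by
    rw [prod_range_jacobi_eq_sum_qBinom hs0 hz, sum_eq_tsum_indicator]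
  have hlim (n : ℤ) : Tendsto (f · n) atTop
      (𝓝 ((∏' i : ℕ, (1 - (s ^ 2) ^ (i + 1)))⁻¹ * (s ^ (n ^ 2) * z ^ n))) := by
    have hshift (c : ℤ) : Tendsto (fun N : ℕ => ((N : ℤ) + c).toNat) atTop atTop :=
      tendsto_atTop_atTop.2 fun k => ⟨k + c.natAbs, fun N hN => by omega⟩
    refine ((tendsto_qBinom_add (hshift n) (hshift (-n)) hq).mul_const _).congr' ?_
    filter_upwards [eventually_ge_atTop n.natAbs] with N hN
    rw [show f N n = _ from Set.indicator_of_mem (mem_coe.2 (mem_Icc.2 ⟨by omega, by omega⟩)) _,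
      show ((N : ℤ) + n).toNat + ((N : ℤ) + -n).toNat = 2 * N by omega]
  have hbound (N : ℕ) (n : ℤ) : ‖f N n‖ ≤ B * ‖s ^ (n ^ 2) * z ^ n‖ := by
    refine (norm_indicator_le_norm_self _ _).trans ?_
    rw [norm_mul]
    exact mul_le_mul_of_nonneg_right (hB _ _) (norm_nonneg _)
  rw [← tsum_mul_left]
  exact (tendsto_tsum_of_dominated_convergence ((summable_norm_zpow_sq_mul_zpow hs z).mul_left B)
    hlim (.of_forall hbound)).congr hfin

lemma multipliable_jacobi [CompleteSpace 𝕜] {s : 𝕜} (hs : ‖s‖ < 1) (z : 𝕜) :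
    Multipliable fun i : ℕ => (1 + s ^ (2 * i + 1) * z) * (1 + s ^ (2 * i + 1) / z) := by
  have h (c : 𝕜) : Multipliable fun i : ℕ => 1 + s ^ (2 * i + 1) * c :=
    multipliable_one_add_of_summable <| by
      simpa [mul_comm] using summable_norm_mul_pow_mul_add hs c two_ne_zero 1
  simpa [div_eq_mul_inv] using (h z).mul (h z⁻¹)

end NormedField

theorem jacobi_triple_product (s z : ℂ) (hs : ‖s‖ < 1) (hz : z ≠ 0) :
    ∑' n : ℤ, s ^ (n ^ 2) * z ^ n
      = (∏' k : ℕ, (1 - (s ^ 2) ^ (k + 1))) *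
        ∏' i : ℕ, ((1 + s ^ (2 * i + 1) * z) * (1 + s ^ (2 * i + 1) / z)) := by
  rcases eq_or_ne s 0 with rfl | hs0
  · rw [tsum_eq_single 0 fun n hn => by rw [zero_zpow _ (pow_ne_zero 2 hn), zero_mul]]
    simp
  have hq : ‖s ^ 2‖ < 1 := by rw [norm_pow]; exact pow_lt_one₀ (norm_nonneg s) hs two_ne_zero
  rw [← tendsto_nhds_unique (tendsto_prod_jacobi hs hs0 hz)
      (multipliable_jacobi hs z).hasProd.tendsto_prod_nat,
    mul_inv_cancel_left₀ (tprod_one_sub_pow_succ_ne_zero hq)]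
end

section
/- The 'elegant generation' of the free boundary state: in the fermionic Fock space, exp(X(v,t))|0⟩ = Σ_S t^{C(S)/2} v^{H(S)} |S⟩, where the sum runs over all admissible subsets S of ℤ+1/2 with even charge, X(v,t) := Σ_{k>ℓ} ψ̃_k(v,t) ψ̃_ℓ(v,t) with ψ̃_i(v,t) = t^{1/2} v^i ψ_i for i > 0 and ψ̃_i(v,t) = (−1)^{i+1/2} t^{−1/2} v^{−i} ψ_i^* for i < 0. -/
noncomputable section
open Classical

def Admissible (S : Set ℤ) : Prop := (posPart S).Finite ∧ (negPart S).Finite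

/-- The charge `C(S) = |S₊| − |S₋|`. -/
noncomputable def charge (S : Set ℤ) : ℤ :=
  ((posPart S).ncard : ℤ) - ((negPart S).ncard : ℤ)

/-- The energy `H(S) = Σ_{k∈S₊} k − Σ_{k∈S₋} k` (recall `m : ℤ` encodes `m + 1/2`). -/
noncomputable def energy (S : Set ℤ) : ℝ :=
  (∑ᶠ m ∈ posPart S, ((m : ℝ) + 1/2)) - ∑ᶠ m ∈ negPart S, ((m : ℝ) + 1/2)

/-- `|S ∩ ℤ'_{>k}|`, the exponent in the fermionic sign. -/
noncomputable def jcount (S : Set ℤ) (k : ℤ) : ℕ := (S ∩ {m | k < m}).ncard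

/-- Action of `ψ_k` on coefficient functions. -/
noncomputable def psiAct (k : ℤ) (f : Set ℤ → ℂ) : Set ℤ → ℂ := fun T =>
  if k ∈ T then (-1 : ℂ) ^ jcount T k * f (T \ {k}) else 0

/-- Action of `ψ_k^*` on coefficient functions. -/
noncomputable def psiStarAct (k : ℤ) (f : Set ℤ → ℂ) : Set ℤ → ℂ := fun T =>
  if k ∉ T then (-1 : ℂ) ^ jcount T k * f (insert k T) else 0

/-- `ψ̃_k(v,t)`: here `k : ℤ` encodes the half-integer `k + 1/2`, so `k ≥ 0` is the
positive case with scalar `t^{1/2} v^{k+1/2}` and `k < 0` the negative case with scalar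
`(−1)^{k+1/2+1/2} t^{−1/2} v^{−(k+1/2)}`. -/
noncomputable def psitAct (v t : ℝ) (k : ℤ) (f : Set ℤ → ℂ) : Set ℤ → ℂ := fun T =>
  if 0 ≤ k then
    ((Real.sqrt t * v ^ ((k : ℝ) + 1/2) : ℝ) : ℂ) * psiAct k f T
  else
    (-1 : ℂ) ^ (k + 1) * (((Real.sqrt t)⁻¹ * v ^ (-(k : ℝ) - 1/2) : ℝ) : ℂ) *
      psiStarAct k f T

/-- The operator `X(v,t) = Σ_{k>ℓ} ψ̃_k(v,t) ψ̃_ℓ(v,t)`, acting coefficient-wise. -/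
noncomputable def XAct (v t : ℝ) (f : Set ℤ → ℂ) : Set ℤ → ℂ := fun T =>
  ∑' q : ℤ × ℤ, if q.2 < q.1 then psitAct v t q.1 (psitAct v t q.2 f) T else 0

/-- The vacuum `|0⟩`, i.e. the basis vector at `S = ℤ'_{<0}`. -/
noncomputable def vacVec : Set ℤ → ℂ := fun T => if T = {m : ℤ | m < 0} then 1 else 0

/-- Coefficient of `Σ_{S : C(S) even} t^{C(S)/2} v^{H(S)} |S⟩` at `S`. -/
noncomputable def fbCoeff (v t : ℝ) (S : Set ℤ) : ℂ :=
  if Even (charge S) then ((t ^ (charge S / 2) * v ^ energy S : ℝ) : ℂ) else 0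

/-!
Let `E(S) = S ∆ ℤ'_{<0}` be the set of particles and holes of `S`. Each `ψ̃_k` toggles `k` in
`E(S)`, with sign `(−1)^{|E(S) ∩ ℤ'_{>k}|}` (for `k < 0` the factor `(−1)^{k+1/2}` of `ψ̃_k`
turns the fermionic sign into this one) and scalar `w_k = t^{±1/2} v^{|k|}`. Hence `⟨S|X^m|0⟩`
vanishes unless `|E(S)| = 2m`, and then equals `m! ∏_{k ∈ E(S)} w_k`: in the inductive step the
signs of the ways to remove a pair from `E(S)` add up to `m + 1`. Finally
`∏_{k ∈ E(S)} w_k = t^{C(S)/2} v^{H(S)}`, both sides being multiplicative over `E(S)`.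
-/

open scoped symmDiff

namespace Set

variable {α : Type*}

theorem symmDiff_singleton_of_mem {s : Set α} {a : α} (h : a ∈ s) : s ∆ {a} = s \ {a} := by
  ext x; by_cases hx : x = a <;> simp [mem_symmDiff, hx, h]

theorem symmDiff_singleton_of_notMem {s : Set α} {a : α} (h : a ∉ s) :
    s ∆ {a} = insert a s := by
  ext x; by_cases hx : x = a <;> simp [mem_symmDiff, hx, h]

theorem ncard_symmDiff_add_one_of_mem {s : Set α} {a : α} (hs : s.Finite) (h : a ∈ s) :
    (s ∆ {a}).ncard + 1 = s.ncard := by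
  rw [symmDiff_singleton_of_mem h, ncard_sdiff_singleton_add_one h hs]

theorem mul_finprod_mem_symmDiff_singleton {M : Type*} [CommMonoid M] (f : α → M) {s : Set α}
    {a : α} (hs : s.Finite) (h : a ∈ s) : f a * ∏ᶠ i ∈ s ∆ {a}, f i = ∏ᶠ i ∈ s, f i := by
  rw [symmDiff_singleton_of_mem h, ← finprod_mem_insert f (by simp) hs.sdiff,
    insert_sdiff_singleton, insert_eq_of_mem h]

theorem neg_one_pow_ncard_symmDiff {R : Type*} [Monoid R] [HasDistribNeg R] {s t : Set α}
    (hs : s.Finite) (ht : t.Finite) :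
    (-1 : R) ^ (s ∆ t).ncard = (-1) ^ s.ncard * (-1) ^ t.ncard := by
  have hst : (s ∆ t).ncard + 2 * (s ∩ t).ncard = s.ncard + t.ncard := by
    have hsdiff :=
      ncard_sdiff_add_ncard_of_subset (inf_le_sup (a := s) (b := t)) (hs.union ht)
    rw [← symmDiff_eq_sup_sdiff_inf] at hsdiff
    have := ncard_union_add_ncard_inter s t hs ht
    simp only [sup_eq_union, inf_eq_inter] at hsdiff
    omega
  rw [← pow_add, ← hst, pow_add, pow_mul, neg_one_sq, one_pow, mul_one]

theorem ncard_symmDiff_pair_add_two {s : Set α} {a b : α} (hs : s.Finite)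
    (ha : a ∈ s) (hb : b ∈ s) (hba : b ≠ a) : (s ∆ {a} ∆ {b}).ncard + 2 = s.ncard := by
  have hb' : b ∈ s ∆ {a} := by simp [mem_symmDiff, hb, hba]
  rw [← ncard_symmDiff_add_one_of_mem hs ha,
    ← ncard_symmDiff_add_one_of_mem (hs.symmDiff (finite_singleton a)) hb']

theorem mul_mul_finprod_mem_symmDiff_pair {M : Type*} [CommMonoid M] (f : α → M)
    {s : Set α} {a b : α} (hs : s.Finite) (ha : a ∈ s) (hb : b ∈ s) (hba : b ≠ a) :
    f a * f b * ∏ᶠ i ∈ s ∆ {a} ∆ {b}, f i = ∏ᶠ i ∈ s, f i := by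
  have hb' : b ∈ s ∆ {a} := by simp [mem_symmDiff, hb, hba]
  rw [mul_assoc, mul_finprod_mem_symmDiff_singleton f (hs.symmDiff (finite_singleton a)) hb',
    mul_finprod_mem_symmDiff_singleton f hs ha]

theorem Finite.finprod_mem_const {M : Type*} [CommMonoid M] {s : Set α} (hs : s.Finite)
    (c : M) : ∏ᶠ _ ∈ s, c = c ^ s.ncard := by
  rw [finprod_mem_eq_finite_toFinset_prod _ hs, Finset.prod_const, ncard_eq_toFinset_card _ hs]

end Set

theorem Real.rpow_finsum_mem_of_nonneg {α : Type*} {s : Set α} (hs : s.Finite) {v : ℝ}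
    (hv : 0 ≤ v) {g : α → ℝ} (hg : ∀ i ∈ s, 0 ≤ g i) :
    v ^ ∑ᶠ i ∈ s, g i = ∏ᶠ i ∈ s, v ^ g i := by
  rw [finsum_mem_eq_finite_toFinset_sum _ hs, finprod_mem_eq_finite_toFinset_prod _ hs,
    Real.rpow_sum_of_nonneg hv fun i hi => hg i (hs.mem_toFinset.1 hi)]

theorem tsum_ite_eq_two_mul {M : Type*} [AddCommMonoid M] [TopologicalSpace M] (n : ℕ) (c : M) :
    ∑' m : ℕ, (if n = 2 * m then c else 0) = if Even n then c else 0 := by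
  split_ifs with hn
  · obtain ⟨k, rfl⟩ := hn
    rw [tsum_eq_single k fun m hm => if_neg (by omega), if_pos (two_mul k).symm]
  · refine (tsum_congr fun m => if_neg fun (h : n = 2 * m) => ?_).trans tsum_zero
    exact hn (h ▸ even_two_mul m)

section CountAbove

open Finset

variable {α R : Type*} [LinearOrder α] [CommRing R]

def countAbove (s : Finset α) (a : α) : ℕ := #{x ∈ s | a < x}

theorem countAbove_insert_of_mem {s : Finset α} {a b : α} (ha : ∀ x ∈ s, a < x)
    (hb : b ∈ s) :
    countAbove (insert a s) b = countAbove s b := by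
  rw [countAbove, countAbove, filter_insert, if_neg (ha b hb).not_gt]

theorem countAbove_insert_self {s : Finset α} {a : α} (ha : ∀ x ∈ s, a < x) :
    countAbove (insert a s) a = #s := by
  rw [countAbove, filter_insert, if_neg (lt_irrefl a), filter_true_of_mem ha]

theorem sum_neg_one_pow_countAbove (s : Finset α) :
    ∑ k ∈ s, (-1 : R) ^ countAbove s k = if Even #s then 0 else 1 := by
  classical
  induction s using Finset.induction_on_min with
  | empty => simp
  | insert a s ha ih =>
    have has : a ∉ s := fun h => lt_irrefl a (ha a h)
    rw [sum_insert has, countAbove_insert_self ha,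
      sum_congr rfl fun k hk => by rw [countAbove_insert_of_mem ha hk], ih,
      card_insert_of_notMem has]
    rcases Nat.even_or_odd #s with h | h
    · simp [h.neg_one_pow, Nat.even_add_one, h]
    · simp [h.neg_one_pow, Nat.even_add_one, Nat.not_even_iff_odd.2 h]

theorem sum_sum_sign_countAbove (s : Finset α) :
    ∑ k ∈ s, ∑ l ∈ s,
      (if l < k then (-1 : R) ^ (countAbove s k + countAbove s l + 1) else 0) = (#s / 2 : ℕ) := by
  classical
  induction s using Finset.induction_on_min with
  | empty => simp
  | insert a s ha ih =>
    have has : a ∉ s := fun h => lt_irrefl a (ha a h)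
    -- the new pairs `(k, a)` contribute `(-1)^(#s + 1)` times the alternating sum over `s`
    have hnew : ∀ k ∈ s, ∑ l ∈ insert a s,
        (if l < k then (-1 : R) ^ (countAbove (insert a s) k + countAbove (insert a s) l + 1)
          else 0) =
        -(-1) ^ #s * (-1) ^ countAbove s k +
          ∑ l ∈ s, (if l < k then (-1 : R) ^ (countAbove s k + countAbove s l + 1) else 0) := by
      intro k hk
      rw [sum_insert has, if_pos (ha k hk), countAbove_insert_self ha,
        countAbove_insert_of_mem ha hk]
      congr 1
      · ring
      · refine sum_congr rfl fun l hl => ?_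
        rw [countAbove_insert_of_mem ha hl]
    rw [sum_insert has, sum_eq_zero fun l hl => if_neg ?_, zero_add, sum_congr rfl hnew,
      sum_add_distrib, ← mul_sum, sum_neg_one_pow_countAbove, ih, card_insert_of_notMem has]
    · rcases Nat.even_or_odd #s with h | h
      · rw [if_pos h, show (#s + 1) / 2 = #s / 2 by obtain ⟨c, hc⟩ := h; omega]
        simp
      · rw [if_neg (Nat.not_even_iff_odd.2 h), h.neg_one_pow,
          show (#s + 1) / 2 = #s / 2 + 1 by obtain ⟨c, hc⟩ := h; omega]
        push_cast
        ring
    · rcases mem_insert.1 hl with rfl | hl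
      · exact lt_irrefl l
      · exact (ha l hl).not_gt

theorem Set.Finite.ncard_inter_Ioi {s : Set α} (hs : s.Finite) (a : α) :
    (s ∩ Set.Ioi a).ncard = countAbove hs.toFinset a := by
  rw [countAbove, ← Set.ncard_coe_finset, coe_filter]
  congr 1
  ext x
  simp

end CountAbove

open Set

def excitations (T : Set ℤ) : Set ℤ := T ∆ Iio 0

section Excitations

variable {T : Set ℤ} {k : ℤ}

theorem mem_excitations_of_nonneg (hk : 0 ≤ k) : k ∈ excitations T ↔ k ∈ T := by
  simp [excitations, mem_symmDiff, hk]

theorem mem_excitations_of_neg (hk : k < 0) : k ∈ excitations T ↔ k ∉ T := by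
  simp [excitations, mem_symmDiff, hk]

theorem excitations_symmDiff_singleton : excitations (T ∆ {k}) = excitations T ∆ {k} :=
  symmDiff_right_comm _ _ _

theorem excitations_eq_empty_iff : excitations T = ∅ ↔ T = {m | m < 0} :=
  symmDiff_eq_bot

theorem posPart_eq_excitations_inter : posPart T = excitations T ∩ Ici 0 := by
  ext m; by_cases hm : 0 ≤ m <;> simp [_root_.posPart, excitations, mem_symmDiff, hm]

theorem negPart_eq_excitations_inter : negPart T = excitations T ∩ Iio 0 := by
  ext m; by_cases hm : m < 0 <;> simp [_root_.negPart, excitations, mem_symmDiff, hm]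

theorem excitations_eq_posPart_union_negPart : excitations T = posPart T ∪ negPart T := by
  rw [posPart_eq_excitations_inter, negPart_eq_excitations_inter, ← inter_union_distrib_left,
    Ici_union_Iio, inter_univ]

theorem disjoint_posPart_negPart : Disjoint (posPart T) (negPart T) := by
  rw [posPart_eq_excitations_inter, negPart_eq_excitations_inter]
  exact ((Iio_disjoint_Ici le_rfl).symm).mono inter_subset_right inter_subset_right

theorem Admissible.finite_excitations (hT : Admissible T) : (excitations T).Finite := by
  rw [excitations_eq_posPart_union_negPart]
  exact hT.1.union hT.2

theorem excitations_inter_Ioi (T : Set ℤ) (k : ℤ) :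
    excitations T ∩ Ioi k = (T ∩ Ioi k) ∆ Ioo k 0 := by
  rw [excitations, inter_symmDiff_distrib_right, Iio_inter_Ioi]

end Excitations

def weight (v t : ℝ) (k : ℤ) : ℝ :=
  (if 0 ≤ k then Real.sqrt t else (Real.sqrt t)⁻¹) * v ^ |(k : ℝ) + 1 / 2|

theorem neg_one_zpow_add_one_of_neg {R : Type*} [DivisionRing R] {k : ℤ} (hk : k < 0) :
    (-1 : R) ^ (k + 1) = (-1) ^ (Ioo k 0).ncard := by
  have hcard : ((Ioo k 0).ncard : ℤ) = -k - 1 := by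
    rw [← Finset.coe_Ioo, ncard_coe_finset, Int.card_Ioo_of_lt _ _ hk]
    ring
  rw [← zpow_natCast, show k + 1 = ((Ioo k 0).ncard : ℤ) + 2 * (k + 1) by omega,
    zpow_add₀ (by norm_num), zpow_mul]
  norm_num

theorem psitAct_apply {v t : ℝ} {T : Set ℤ} (hE : (excitations T).Finite) (k : ℤ)
    (f : Set ℤ → ℂ) :
    psitAct v t k f T = if k ∈ excitations T then
      (-1) ^ (excitations T ∩ Ioi k).ncard * (weight v t k : ℂ) * f (T ∆ {k}) else 0 := by
  have hfin : (T ∩ Ioi k).Finite := by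
    rw [← symmDiff_symmDiff_cancel_right (b := T ∩ Ioi k) (a := Ioo k 0),
      ← excitations_inter_Ioi]
    exact (hE.inter_of_left _).symmDiff (finite_Ioo _ _)
  have hsign : (-1 : ℂ) ^ (excitations T ∩ Ioi k).ncard =
      (-1) ^ jcount T k * (-1) ^ (Ioo k 0).ncard := by
    rw [excitations_inter_Ioi, neg_one_pow_ncard_symmDiff hfin (finite_Ioo _ _), jcount]
    rfl
  by_cases hk : 0 ≤ k
  · rw [hsign, Ioo_eq_empty (not_lt.2 hk), ncard_empty, pow_zero, mul_one]
    by_cases hkT : k ∈ T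
    · rw [if_pos ((mem_excitations_of_nonneg hk).2 hkT), psitAct, if_pos hk, psiAct, if_pos hkT,
        weight, if_pos hk, abs_of_nonneg (by positivity), symmDiff_singleton_of_mem hkT]
      push_cast
      ring
    · rw [if_neg (mt (mem_excitations_of_nonneg hk).1 hkT), psitAct, if_pos hk, psiAct,
        if_neg hkT, mul_zero]
  · have hk' : k < 0 := not_le.1 hk
    rw [hsign, ← neg_one_zpow_add_one_of_neg hk']
    by_cases hkT : k ∈ T
    · rw [if_neg (not_not.2 hkT ∘ (mem_excitations_of_neg hk').1), psitAct, if_neg hk,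
        psiStarAct, if_neg (not_not.2 hkT), mul_zero]
    · have habs : |(k : ℝ) + 1 / 2| = -(k : ℝ) - 1 / 2 := by
        have : (k : ℝ) ≤ -1 := by exact_mod_cast Int.le_sub_one_of_lt hk'
        rw [abs_of_neg (by linarith)]
        ring
      rw [if_pos ((mem_excitations_of_neg hk').2 hkT), psitAct, if_neg hk, psiStarAct,
        if_pos hkT, weight, if_neg hk, habs, symmDiff_singleton_of_notMem hkT]
      push_cast
      ring

theorem psitAct_psitAct_apply {v t : ℝ} {T : Set ℤ} (hE : (excitations T).Finite) {k l : ℤ}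
    (hlk : l < k) (f : Set ℤ → ℂ) :
    psitAct v t k (psitAct v t l f) T =
      if k ∈ excitations T ∧ l ∈ excitations T then
        (-1) ^ ((excitations T ∩ Ioi k).ncard + (excitations T ∩ Ioi l).ncard + 1) *
          ((weight v t k * weight v t l : ℝ) : ℂ) * f (T ∆ {k} ∆ {l})
      else 0 := by
  have hE' : (excitations (T ∆ {k})).Finite := by
    rw [excitations_symmDiff_singleton]; exact hE.symmDiff (finite_singleton k)
  have hl : l ∈ excitations (T ∆ {k}) ↔ l ∈ excitations T := by
    simp [excitations_symmDiff_singleton, mem_symmDiff, hlk.ne]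
  have hsign : (-1 : ℂ) ^ (excitations (T ∆ {k}) ∩ Ioi l).ncard =
      (-1) ^ ((excitations T ∩ Ioi l).ncard + 1) := by
    rw [excitations_symmDiff_singleton, inter_symmDiff_distrib_right,
      singleton_inter_of_mem (show k ∈ Ioi l from hlk),
      neg_one_pow_ncard_symmDiff (hE.inter_of_left _) (finite_singleton k), ncard_singleton,
      pow_one, pow_succ]
  rw [psitAct_apply hE k, psitAct_apply hE' l, hl, hsign]
  by_cases hkE : k ∈ excitations T <;> by_cases hlE : l ∈ excitations T <;>
    simp only [hkE, hlE, and_self, and_true, true_and, if_true, if_false, mul_zero]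
  push_cast
  ring

theorem XAct_apply {v t : ℝ} {T : Set ℤ} (hE : (excitations T).Finite) (f : Set ℤ → ℂ) :
    XAct v t f T = ∑ k ∈ hE.toFinset, ∑ l ∈ hE.toFinset, if l < k then
      (-1) ^ (countAbove hE.toFinset k + countAbove hE.toFinset l + 1) *
        ((weight v t k * weight v t l : ℝ) : ℂ) * f (T ∆ {k} ∆ {l}) else 0 := by
  rw [XAct, tsum_eq_sum (s := hE.toFinset ×ˢ hE.toFinset), Finset.sum_product]
  · refine Finset.sum_congr rfl fun k hk => Finset.sum_congr rfl fun l hl => ?_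
    rw [Finite.mem_toFinset] at hk hl
    split_ifs with hlk
    · rw [psitAct_psitAct_apply hE hlk, if_pos ⟨hk, hl⟩, hE.ncard_inter_Ioi,
        hE.ncard_inter_Ioi]
    · rfl
  · rintro ⟨k, l⟩ hkl
    simp only [Finset.mem_product, Finite.mem_toFinset, not_and_or] at hkl
    split_ifs with hlk
    · rw [psitAct_psitAct_apply hE hlk, if_neg (by tauto)]
    · rfl

def expXTerm (v t : ℝ) (m : ℕ) (T : Set ℤ) : ℂ :=
  if (excitations T).ncard = 2 * m then ((∏ᶠ i ∈ excitations T, weight v t i : ℝ) : ℂ)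
  else 0

theorem weight_mul_weight_mul_expXTerm {v t : ℝ} (m : ℕ) {T : Set ℤ}
    (hE : (excitations T).Finite) {k l : ℤ} (hk : k ∈ excitations T) (hl : l ∈ excitations T)
    (hlk : l ≠ k) :
    ((weight v t k * weight v t l : ℝ) : ℂ) * expXTerm v t m (T ∆ {k} ∆ {l}) =
      expXTerm v t (m + 1) T := by
  have hcard := ncard_symmDiff_pair_add_two hE hk hl hlk
  have hiff : (excitations T ∆ {k} ∆ {l}).ncard = 2 * m ↔
      (excitations T).ncard = 2 * (m + 1) := by omega
  simp only [expXTerm, excitations_symmDiff_singleton, hiff]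
  split_ifs
  · rw [← mul_mul_finprod_mem_symmDiff_pair (weight v t) hE hk hl hlk]
    push_cast
    ring
  · rw [mul_zero]

theorem XAct_iterate_vacVec_apply (v t : ℝ) (m : ℕ) {T : Set ℤ}
    (hE : (excitations T).Finite) :
    ((XAct v t)^[m] vacVec) T = m.factorial * expXTerm v t m T := by
  induction m generalizing T with
  | zero =>
    simp only [Function.iterate_zero_apply, vacVec, expXTerm, mul_zero, ncard_eq_zero hE,
      excitations_eq_empty_iff]
    split_ifs with hT
    · rw [excitations_eq_empty_iff.2 hT, finprod_mem_empty]
      simp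
    · simp
  | succ m ih =>
    set F := hE.toFinset
    have hterm : ∀ k ∈ F, ∀ l ∈ F, (if l < k then
        (-1) ^ (countAbove F k + countAbove F l + 1) * ((weight v t k * weight v t l : ℝ) : ℂ) *
          ((XAct v t)^[m] vacVec) (T ∆ {k} ∆ {l}) else 0) =
        (if l < k then (-1) ^ (countAbove F k + countAbove F l + 1) else 0) *
          (m.factorial * expXTerm v t (m + 1) T) := by
      intro k hk l hl
      rw [Finite.mem_toFinset] at hk hl
      split_ifs with hlk
      · have hfin : (excitations (T ∆ {k} ∆ {l})).Finite := by
          rw [excitations_symmDiff_singleton, excitations_symmDiff_singleton]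
          exact (hE.symmDiff (finite_singleton k)).symmDiff (finite_singleton l)
        rw [ih hfin, ← weight_mul_weight_mul_expXTerm m hE hk hl hlk.ne]
        ring
      · rw [zero_mul]
    rw [Function.iterate_succ_apply', XAct_apply hE,
      Finset.sum_congr rfl fun k hk => Finset.sum_congr rfl (hterm k hk)]
    simp_rw [← Finset.sum_mul]
    rw [sum_sum_sign_countAbove, ← ncard_eq_toFinset_card _ hE]
    by_cases hcard : (excitations T).ncard = 2 * (m + 1)
    · rw [hcard, Nat.mul_div_cancel_left _ two_pos, Nat.factorial_succ]
      push_cast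
      ring
    · rw [expXTerm, if_neg hcard, mul_zero, mul_zero, mul_zero]

section FreeBoundary

variable {T : Set ℤ}

theorem ncard_excitations (hT : Admissible T) :
    (excitations T).ncard = (posPart T).ncard + (negPart T).ncard := by
  rw [excitations_eq_posPart_union_negPart,
    ncard_union_eq disjoint_posPart_negPart hT.1 hT.2]

theorem even_charge_iff (hT : Admissible T) : Even (charge T) ↔ Even (excitations T).ncard := by
  rw [charge, ncard_excitations hT, Int.even_sub, Nat.even_add, Int.even_coe_nat, Int.even_coe_nat]

theorem energy_eq_finsum_mem_abs (hT : Admissible T) :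
    energy T = ∑ᶠ m ∈ excitations T, |(m : ℝ) + 1 / 2| := by
  rw [excitations_eq_posPart_union_negPart,
    finsum_mem_union disjoint_posPart_negPart hT.1 hT.2, energy, sub_eq_add_neg,
    ← finsum_mem_neg_distrib _ hT.2]
  congr 1 <;> refine finsum_mem_congr rfl fun m hm => ?_
  · have : (0 : ℝ) ≤ m := by exact_mod_cast hm.2
    rw [abs_of_nonneg (by linarith)]
  · have : (m : ℝ) ≤ -1 := by exact_mod_cast Int.le_sub_one_of_lt hm.1
    rw [abs_of_neg (by linarith)]

theorem finprod_mem_sqrt_weight (t : ℝ) (hT : Admissible T) :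
    ∏ᶠ m ∈ excitations T, (if 0 ≤ m then Real.sqrt t else (Real.sqrt t)⁻¹) =
      Real.sqrt t ^ (posPart T).ncard * (Real.sqrt t)⁻¹ ^ (negPart T).ncard := by
  rw [excitations_eq_posPart_union_negPart,
    finprod_mem_union disjoint_posPart_negPart hT.1 hT.2, ← hT.1.finprod_mem_const,
    ← hT.2.finprod_mem_const]
  congr 1 <;> refine finprod_mem_congr rfl fun m hm => ?_
  · exact if_pos hm.2
  · exact if_neg (not_le.2 hm.1)

theorem zpow_charge_div_two {t : ℝ} (ht : 0 < t) (hc : Even (charge T)) :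
    t ^ (charge T / 2) =
      Real.sqrt t ^ (posPart T).ncard * (Real.sqrt t)⁻¹ ^ (negPart T).ncard := by
  obtain ⟨c, hc⟩ := hc
  have hpn : ((posPart T).ncard : ℤ) + -((negPart T).ncard : ℤ) = 2 * c := by
    rw [← sub_eq_add_neg, ← charge, hc, two_mul]
  rw [hc, show (c + c) / 2 = c by omega, inv_pow, ← zpow_natCast, ← zpow_natCast, ← zpow_neg,
    ← zpow_add₀ (Real.sqrt_pos.2 ht).ne', hpn, zpow_mul, zpow_two, Real.mul_self_sqrt ht.le]

theorem fbCoeff_eq_finprod_mem_weight {v t : ℝ} (hv : 0 ≤ v) (ht : 0 < t) (hT : Admissible T) :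
    fbCoeff v t T = if Even (excitations T).ncard then
      ((∏ᶠ m ∈ excitations T, weight v t m : ℝ) : ℂ) else 0 := by
  by_cases hc : Even (charge T)
  · simp only [fbCoeff, if_pos hc, if_pos ((even_charge_iff hT).1 hc), weight]
    rw [finprod_mem_mul_distrib hT.finite_excitations, finprod_mem_sqrt_weight t hT,
      ← Real.rpow_finsum_mem_of_nonneg hT.finite_excitations hv fun m _ => abs_nonneg _,
      ← energy_eq_finsum_mem_abs hT, zpow_charge_div_two ht hc]
  · rw [fbCoeff, if_neg hc, if_neg (mt (even_charge_iff hT).2 hc)]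

end FreeBoundary

theorem expX_vacuum_eq_free_boundary_state_general (v t : ℝ)
    (hv0 : 0 ≤ v) (ht : 0 < t)
    (T : Set ℤ) (hT : Admissible T) :
    ∑' m : ℕ, ((m.factorial : ℂ))⁻¹ * ((XAct v t)^[m] vacVec) T = fbCoeff v t T := by
  have hterm (m : ℕ) :
      ((m.factorial : ℂ))⁻¹ * ((XAct v t)^[m] vacVec) T = expXTerm v t m T := by
    rw [XAct_iterate_vacVec_apply v t m hT.finite_excitations,
      inv_mul_cancel_left₀ (by exact_mod_cast m.factorial_ne_zero)]
  simp only [hterm, expXTerm]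
  rw [tsum_ite_eq_two_mul, fbCoeff_eq_finprod_mem_weight hv0 ht hT]

theorem expX_vacuum_eq_free_boundary_state (v t : ℝ)
    (hv0 : 0 ≤ v) (hv1 : v < 1) (ht : 0 < t)
    (T : Set ℤ) (hT : Admissible T) :
    ∑' m : ℕ, ((m.factorial : ℂ))⁻¹ * ((XAct v t)^[m] vacVec) T = fbCoeff v t T :=
  expX_vacuum_eq_free_boundary_state_general v t hv0 ht T hT

end
end

section
/- Dilogarithm limit of q-Pochhammer: if q = e^{−r} with r → 0+, and z ∈ ℂ ∖ [1,∞), then r · log (z;q)_∞ → −Li₂(z), where (z;q)_∞ = ∏_{k≥0}(1 − z q^k) and Li₂(z) = Σ_{n≥1} z^n/n² (analytically continued by Li₂(z) = −∫₀^z log(1−u)/u du). -/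
/-!
Put `g(s) = log (1 - s z)`. The substitution `s = e^{-t}` turns `-Li₂(z) = ∫₀¹ g(s)/s ds` into
`∫₀^∞ g(e^{-t}) dt`, of which `r ∑ₖ g(e^{-rk}) = r ∑ₖ log (1 - z qᵏ)` is the left Riemann sum
with mesh `r`. Since `z ∉ [1, ∞)`, `1 - s z` stays away from `0` for `s ∈ [0, 1]`, so `g'` is
bounded by some `K` on `[0, 1]`. Then `g(e^{-t})` and its derivative are `O(e^{-t})`, the cell
`[rk, r(k+1)]` contributes an error of at most `K r² e^{-rk}`, and the geometric series bounds
the total error by `K r² / (1 - e^{-r}) ≤ K r (1 + r)`.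
-/

/-- The dilogarithm `Li₂(z) = −∫₀^z log(1−u)/u du`, parametrized along the segment
from `0` to `z`. -/
noncomputable def Li2 (z : ℂ) : ℂ :=
  -∫ s in (0 : ℝ)..1, Complex.log (1 - (s : ℂ) * z) / (s : ℂ)

open Real Set Filter MeasureTheory Topology

section RiemannSum

variable {E : Type*} [NormedAddCommGroup E] [NormedSpace ℝ E]

theorem norm_smul_sub_intervalIntegral_le_of_norm_deriv_le [CompleteSpace E] {f f' : ℝ → E}
    {a b C : ℝ} (hab : a ≤ b) (hf : ∀ t ∈ Icc a b, HasDerivWithinAt f (f' t) (Icc a b) t)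
    (hC : ∀ t ∈ Ico a b, ‖f' t‖ ≤ C) :
    ‖(b - a) • f a - ∫ t in a..b, f t‖ ≤ C * (b - a) ^ 2 := by
  rcases hab.eq_or_lt with rfl | hab
  · simp
  have hC0 : 0 ≤ C := (norm_nonneg _).trans (hC a ⟨le_rfl, hab⟩)
  have hfi : IntervalIntegrable f volume a b :=
    (ContinuousOn.intervalIntegrable_of_Icc hab.le fun t ht => (hf t ht).continuousWithinAt)
  have hbound : ∀ t ∈ uIoc a b, ‖f a - f t‖ ≤ C * (b - a) := by
    intro t ht
    rw [uIoc_of_le hab.le] at ht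
    rw [norm_sub_rev]
    calc ‖f t - f a‖ ≤ C * (t - a) :=
          norm_image_sub_le_of_norm_deriv_le_segment' hf hC t (Ioc_subset_Icc_self ht)
      _ ≤ C * (b - a) := mul_le_mul_of_nonneg_left (by linarith [ht.2]) hC0
  calc ‖(b - a) • f a - ∫ t in a..b, f t‖ = ‖∫ t in a..b, (f a - f t)‖ := by
        rw [intervalIntegral.integral_sub intervalIntegrable_const hfi,
          intervalIntegral.integral_const]
    _ ≤ C * (b - a) * |b - a| := intervalIntegral.norm_integral_le_of_norm_le_const hbound
    _ = C * (b - a) ^ 2 := by rw [abs_of_pos (sub_pos.2 hab)]; ring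

theorem hasSum_intervalIntegral_mul_nat {f : ℝ → E} {r : ℝ} (hr : 0 < r)
    (hf : IntegrableOn f (Ioi 0)) :
    HasSum (fun k : ℕ => ∫ t in r * k..r * (k + 1), f t) (∫ t in Ioi 0, f t) := by
  have hmono : Monotone fun k : ℕ => r * k := fun _ _ h => by dsimp only; gcongr
  have hunion : ⋃ k : ℕ, Ioc (r * k) (r * (k + 1)) = Ioi 0 := by
    simpa using iUnion_Ioc_map_succ_eq_Ioi (fun k => hmono (Nat.zero_le k))
      (not_bddAbove_of_tendsto_atTop (tendsto_natCast_atTop_atTop.const_mul_atTop hr))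
  have := hasSum_integral_iUnion (fun _ => measurableSet_Ioc)
    (by simpa using hmono.pairwise_disjoint_on_Ioc_succ) (hunion ▸ hf)
  rw [hunion] at this
  convert this using 2 with k
  rw [intervalIntegral.integral_of_le (by linarith)]

theorem norm_smul_tsum_sub_integral_Ioi_le [CompleteSpace E] {f f' : ℝ → E} {K M r : ℝ}
    (hf : ∀ t ∈ Ici 0, HasDerivWithinAt f (f' t) (Ici 0) t)
    (hf' : ∀ t ∈ Ici 0, ‖f' t‖ ≤ K * exp (-t)) (hfM : ∀ t ∈ Ici 0, ‖f t‖ ≤ M * exp (-t))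
    (hr : 0 < r) :
    ‖r • ∑' k : ℕ, f (r * k) - ∫ t in Ioi 0, f t‖ ≤ K * r ^ 2 * (1 - exp (-r))⁻¹ := by
  have hq0 : 0 ≤ exp (-r) := (exp_pos _).le
  have hq1 : exp (-r) < 1 := exp_lt_one_iff.2 (neg_lt_zero.2 hr)
  have hexp : ∀ k : ℕ, exp (-(r * k)) = exp (-r) ^ k := fun k => by
    rw [← exp_nat_mul]; ring_nf
  have hnode : ∀ k : ℕ, r * k ∈ Ici 0 := fun k => mem_Ici.2 (by positivity)
  have hK : 0 ≤ K := by simpa using (norm_nonneg _).trans (hf' 0 self_mem_Ici)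
  have hint : IntegrableOn f (Ioi 0) := by
    refine ((exp_neg_integrableOn_Ioi 0 one_pos).const_mul M).mono' ?_ ?_
    · exact (ContinuousOn.mono (fun t ht => (hf t ht).continuousWithinAt)
        Ioi_subset_Ici_self).aestronglyMeasurable measurableSet_Ioi
    · filter_upwards [ae_restrict_mem measurableSet_Ioi] with t ht
      simpa using hfM t (mem_Ici.2 ht.le)
  have hpiece : ∀ k : ℕ,
      ‖r • f (r * k) - ∫ t in r * k..r * (k + 1), f t‖ ≤ K * r ^ 2 * exp (-r) ^ k := by
    intro k
    have hsub : Icc (r * k) (r * (k + 1)) ⊆ Ici 0 := fun t ht => (hnode k).trans ht.1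
    have := norm_smul_sub_intervalIntegral_le_of_norm_deriv_le (f := f) (by linarith)
      (fun t ht => (hf t (hsub ht)).mono hsub)
      (fun t ht => (hf' t (hsub (Ico_subset_Icc_self ht))).trans
        (mul_le_mul_of_nonneg_left (exp_le_exp.2 (neg_le_neg ht.1)) hK))
    rw [show r * (k + 1) - r * k = r by ring, hexp] at this
    linarith
  have hsum : Summable fun k : ℕ => f (r * k) := by
    refine Summable.of_norm_bounded ((summable_geometric_of_lt_one hq0 hq1).mul_left M) fun k => ?_
    rw [← hexp]
    exact hfM _ (hnode k)
  have hdiff := (hsum.hasSum.const_smul r).sub (hasSum_intervalIntegral_mul_nat hr hint)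
  exact hdiff.norm_le_of_bounded
    ((hasSum_geometric_of_lt_one hq0 hq1).mul_left (K * r ^ 2)) hpiece

theorem integral_comp_exp_neg_Ioi (g : ℝ → E) :
    ∫ t in Ioi 0, g (exp (-t)) = ∫ s in (0 : ℝ)..1, s⁻¹ • g s := by
  have himage : (fun t => exp (-t)) '' Ioi 0 = Ioo 0 1 := by
    ext s
    refine ⟨?_, fun hs => ⟨-log s, ?_, ?_⟩⟩
    · rintro ⟨t, ht, rfl⟩
      exact ⟨exp_pos _, exp_lt_one_iff.2 (neg_lt_zero.2 ht)⟩
    · simpa using log_neg hs.1 hs.2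
    · simp [exp_log hs.1]
  rw [intervalIntegral.integral_of_le zero_le_one, integral_Ioc_eq_integral_Ioo, ← himage,
    integral_image_eq_integral_abs_deriv_smul measurableSet_Ioi
      (fun t _ => ((hasDerivAt_neg t).exp).hasDerivWithinAt)
      (fun a _ b _ h => neg_injective (exp_injective h))]
  refine setIntegral_congr_fun measurableSet_Ioi fun t _ => ?_
  simp [abs_of_pos (exp_pos _), smul_smul]

theorem norm_smul_tsum_geometric_sub_integral_le [CompleteSpace E] {g g' : ℝ → E} {K r : ℝ}
    (hg : ∀ s ∈ Icc 0 1, HasDerivWithinAt g (g' s) (Icc 0 1) s)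
    (hg' : ∀ s ∈ Icc 0 1, ‖g' s‖ ≤ K) (hg0 : g 0 = 0) (hr : 0 < r) :
    ‖r • ∑' k : ℕ, g (exp (-r) ^ k) - ∫ s in (0 : ℝ)..1, s⁻¹ • g s‖ ≤
      K * r ^ 2 * (1 - exp (-r))⁻¹ := by
  have hmaps : MapsTo (fun t => exp (-t)) (Ici 0) (Icc 0 1) := fun t ht =>
    ⟨(exp_pos _).le, exp_le_one_iff.2 (neg_nonpos.2 ht)⟩
  have hbound : ∀ t ∈ Ici 0, ‖g (exp (-t))‖ ≤ K * exp (-t) := fun t ht => by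
    simpa [hg0] using norm_image_sub_le_of_norm_deriv_le_segment' hg
      (fun s hs => hg' s (Ico_subset_Icc_self hs)) _ (hmaps ht)
  have hderiv : ∀ t ∈ Ici 0, ‖(exp (-t) * -1) • g' (exp (-t))‖ ≤ K * exp (-t) := fun t ht => by
    rw [norm_smul, mul_neg_one, norm_neg, norm_of_nonneg (exp_pos _).le, mul_comm]
    exact mul_le_mul_of_nonneg_right (hg' _ (hmaps ht)) (exp_pos _).le
  have := norm_smul_tsum_sub_integral_Ioi_le
    (fun t ht => (hg _ (hmaps ht)).scomp t ((hasDerivAt_neg t).exp).hasDerivWithinAt hmaps)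
    hderiv hbound hr
  have hexp : ∀ k : ℕ, exp (-r) ^ k = exp (-(r * k)) := fun k => by rw [← exp_nat_mul]; ring_nf
  simpa only [hexp, ← integral_comp_exp_neg_Ioi, Function.comp_def] using this

end RiemannSum

theorem sq_mul_inv_one_sub_exp_neg_le {r : ℝ} (hr : 0 < r) :
    r ^ 2 * (1 - exp (-r))⁻¹ ≤ r * (1 + r) := by
  have hexp : exp (-r) ≤ (1 + r)⁻¹ := by
    rw [exp_neg]
    exact inv_anti₀ (by positivity) (by linarith [add_one_le_exp r])
  have hgap : r / (1 + r) ≤ 1 - exp (-r) := by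
    rw [show r / (1 + r) = 1 - (1 + r)⁻¹ by field_simp; ring]
    linarith
  calc r ^ 2 * (1 - exp (-r))⁻¹ ≤ r ^ 2 * (r / (1 + r))⁻¹ := by gcongr
    _ = r * (1 + r) := by field_simp

namespace Complex

theorem one_sub_ofReal_mul_mem_slitPlane {z : ℂ} (hz : ∀ x : ℝ, 1 ≤ x → z ≠ x) {s : ℝ}
    (hs : s ∈ Icc (0 : ℝ) 1) : 1 - (s : ℂ) * z ∈ slitPlane := by
  by_contra h
  simp only [mem_slitPlane_iff, sub_re, one_re, re_ofReal_mul, sub_im, one_im, im_ofReal_mul,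
    zero_sub, neg_eq_zero, mul_eq_zero, not_or, not_lt, not_not] at h
  obtain ⟨hre, hs0 | him⟩ := h
  · simp [hs0] at hre; linarith
  · have hzre : 0 ≤ z.re := by nlinarith [hs.1]
    have : 1 ≤ z.re := by nlinarith [mul_le_mul_of_nonneg_right hs.2 hzre]
    exact hz z.re this (ext rfl him)

theorem exists_pos_le_norm_one_sub_ofReal_mul {z : ℂ} (hz : ∀ x : ℝ, 1 ≤ x → z ≠ x) :
    ∃ c > 0, ∀ s ∈ Icc (0 : ℝ) 1, c ≤ ‖1 - (s : ℂ) * z‖ := by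
  obtain ⟨s₀, hs₀, hmin⟩ := isCompact_Icc.exists_isMinOn (nonempty_Icc.2 zero_le_one)
    (by fun_prop : ContinuousOn (fun s : ℝ => ‖1 - (s : ℂ) * z‖) (Icc 0 1))
  exact ⟨_, norm_pos_iff.2 (slitPlane_ne_zero (one_sub_ofReal_mul_mem_slitPlane hz hs₀)),
    fun s hs => hmin hs⟩

theorem hasDerivAt_log_one_sub_ofReal_mul {z : ℂ} {s : ℝ} (hs : 1 - (s : ℂ) * z ∈ slitPlane) :
    HasDerivAt (fun s : ℝ => log (1 - s * z)) (-z / (1 - s * z)) s := by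
  have := (((hasDerivAt_id s).ofReal_comp.mul_const z).const_sub 1).clog_real hs
  simpa using this

end Complex

theorem neg_Li2_eq_integral (z : ℂ) :
    -Li2 z = ∫ s in (0 : ℝ)..1, s⁻¹ • Complex.log (1 - s * z) := by
  rw [Li2, neg_neg]
  refine intervalIntegral.integral_congr fun s _ => ?_
  simp [Complex.real_smul, div_eq_inv_mul]

theorem exists_norm_smul_tsum_log_one_sub_mul_sub_neg_Li2_le {z : ℂ}
    (hz : ∀ x : ℝ, 1 ≤ x → z ≠ x) : ∃ K : ℝ, ∀ r ∈ Ioi (0 : ℝ),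
      ‖(r : ℂ) * ∑' k : ℕ, Complex.log (1 - z * Complex.exp (-(r : ℂ)) ^ k) - -Li2 z‖ ≤
        K * (r * (1 + r)) := by
  obtain ⟨c, hc, hcle⟩ := Complex.exists_pos_le_norm_one_sub_ofReal_mul hz
  have hterm : ∀ (r : ℝ) (k : ℕ), Complex.exp (-(r : ℂ)) ^ k = ((exp (-r) ^ k : ℝ) : ℂ) := by
    intro r k; push_cast; rfl
  refine ⟨‖z‖ / c, fun r hr => ?_⟩
  have hriemann :=
    norm_smul_tsum_geometric_sub_integral_le (g := fun s : ℝ => Complex.log (1 - s * z))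
      (fun s hs => (Complex.hasDerivAt_log_one_sub_ofReal_mul
        (Complex.one_sub_ofReal_mul_mem_slitPlane hz hs)).hasDerivWithinAt)
      (fun s hs => by
        rw [norm_div, norm_neg]
        exact div_le_div_of_nonneg_left (norm_nonneg _) hc (hcle s hs))
      (by simp) hr
  simp only [hterm, mul_comm z, ← Complex.real_smul, neg_Li2_eq_integral]
  refine hriemann.trans ?_
  rw [mul_assoc]
  exact mul_le_mul_of_nonneg_left (sq_mul_inv_one_sub_exp_neg_le hr) (by positivity)

theorem qPochhammer_dilog_asymptotics (z : ℂ)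
    (hz : ∀ x : ℝ, 1 ≤ x → z ≠ (x : ℂ)) :
    Filter.Tendsto
      (fun r : ℝ => (r : ℂ) * ∑' k : ℕ, Complex.log (1 - z * Complex.exp (-(r : ℂ)) ^ k))
      (nhdsWithin 0 (Set.Ioi 0)) (nhds (-(Li2 z))) := by
  obtain ⟨K, hK⟩ := exists_norm_smul_tsum_log_one_sub_mul_sub_neg_Li2_le hz
  have hbound : Tendsto (fun r : ℝ => K * (r * (1 + r))) (𝓝[>] 0) (𝓝 0) := by
    have hcont : Continuous fun r : ℝ => K * (r * (1 + r)) := by fun_prop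
    simpa using (hcont.tendsto 0).mono_left nhdsWithin_le_nhds
  exact tendsto_iff_norm_sub_tendsto_zero.2 <|
    squeeze_zero' (.of_forall fun _ => norm_nonneg _) (eventually_nhdsWithin_of_forall hK) hbound
end
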